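/- arXiv:2301.10061 — 3 statements merged into one kernel-verified Lean document; each statement's English description precedes it below -/
import Mathlib

section
/- Left-partial couplings compose along bind: if there is an R-left-partial coupling of μ₁ ∈ D(A) and μ₂ ∈ D(B), and for all (a,b) ∈ R there is an S-left-partial coupling of f₁(a) and f₂(b), then there is an S-left-partial coupling of mbind(f₁, μ₁) and mbind(f₂, μ₂). -/
open scoped ENNReal Classical

/-- Dirac point mass sub-distribution. -/
noncomputable def mret {A : Type*} (a : A) : A → ℝ≥0∞ :=
  fun a' => if a' = a then 1 else 0

/-- Monadic bind of sub-distributions: `mbind f μ b = Σ_a μ(a) · f(a)(b)`. -/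
noncomputable def mbind {A B : Type*} (f : A → B → ℝ≥0∞) (μ : A → ℝ≥0∞) : B → ℝ≥0∞ :=
  fun b => ∑' a, μ a * f a b

/-- A sub-distribution: total mass at most 1. -/
def IsSubPMF {A : Type*} (μ : A → ℝ≥0∞) : Prop := ∑' a, μ a ≤ 1

/-- `μ` is a coupling of `μ₁` and `μ₂`: its marginals are `μ₁` and `μ₂`. -/
def IsCoupling {A B : Type*} (μ : A × B → ℝ≥0∞) (μ₁ : A → ℝ≥0∞) (μ₂ : B → ℝ≥0∞) : Prop :=
  (∀ a, ∑' b, μ (a, b) = μ₁ a) ∧ (∀ b, ∑' a, μ (a, b) = μ₂ b)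

/-- Existence of an `R`-coupling. -/
def Rcoupl {A B : Type*} (μ₁ : A → ℝ≥0∞) (μ₂ : B → ℝ≥0∞) (R : A → B → Prop) : Prop :=
  ∃ μ : A × B → ℝ≥0∞, IsCoupling μ μ₁ μ₂ ∧ ∀ p, 0 < μ p → R p.1 p.2

/-- `μ` is a left-partial coupling of `μ₁` and `μ₂`: left marginal equals `μ₁`,
right marginal is pointwise at most `μ₂`. -/
def IsLPCoupling {A B : Type*} (μ : A × B → ℝ≥0∞) (μ₁ : A → ℝ≥0∞) (μ₂ : B → ℝ≥0∞) : Prop :=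
  (∀ a, ∑' b, μ (a, b) = μ₁ a) ∧ (∀ b, ∑' a, μ (a, b) ≤ μ₂ b)

/-- Existence of an `R`-left-partial coupling. -/
def refRcoupl {A B : Type*} (μ₁ : A → ℝ≥0∞) (μ₂ : B → ℝ≥0∞) (R : A → B → Prop) : Prop :=
  ∃ μ : A × B → ℝ≥0∞, IsLPCoupling μ μ₁ μ₂ ∧ ∀ p, 0 < μ p → R p.1 p.2

/-! Choose for every pair `p` in the support of an `R`-left-partial coupling `μ` an
`S`-left-partial coupling `ν p` of `f₁ p.1` and `f₂ p.2`; then `mbind ν μ` is the required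
coupling. Since sums in `ℝ≥0∞` may be reordered freely, its marginals are the `μ`-averages of
the marginals of the `ν p`, which gives `mbind f₁ μ₁` on the left and at most `mbind f₂ μ₂` on
the right. Off the support of `μ` the choice of `ν p` is irrelevant, as it is weighted by `0`. -/

section mbind

variable {α β γ : Type*}

theorem tsum_mul_congr_of_ne_zero {μ g h : α → ℝ≥0∞} (hgh : ∀ a, μ a ≠ 0 → g a = h a) :
    ∑' a, μ a * g a = ∑' a, μ a * h a :=
  tsum_congr fun a => by by_cases ha : μ a = 0 <;> simp [ha, hgh]

theorem tsum_mul_le_of_ne_zero {μ g h : α → ℝ≥0∞} (hgh : ∀ a, μ a ≠ 0 → g a ≤ h a) :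
    ∑' a, μ a * g a ≤ ∑' a, μ a * h a :=
  ENNReal.tsum_le_tsum fun a => by
    by_cases ha : μ a = 0
    · simp [ha]
    · exact mul_le_mul_right (hgh a ha) _

theorem mbind_ne_zero_iff {f : α → β → ℝ≥0∞} {μ : α → ℝ≥0∞} {b : β} :
    mbind f μ b ≠ 0 ↔ ∃ a, μ a ≠ 0 ∧ f a b ≠ 0 := by
  simp [mbind, ENNReal.tsum_eq_zero]

theorem tsum_fst_mbind (ν : γ → α × β → ℝ≥0∞) (μ : γ → ℝ≥0∞) (a : α) :
    ∑' b, mbind ν μ (a, b) = ∑' p, μ p * ∑' b, ν p (a, b) := by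
  simp only [mbind, ← ENNReal.tsum_mul_left]
  exact ENNReal.tsum_comm

theorem tsum_snd_mbind (ν : γ → α × β → ℝ≥0∞) (μ : γ → ℝ≥0∞) (b : β) :
    ∑' a, mbind ν μ (a, b) = ∑' p, μ p * ∑' a, ν p (a, b) := by
  simp only [mbind, ← ENNReal.tsum_mul_left]
  exact ENNReal.tsum_comm

theorem mbind_eq_tsum_mul_fst {μ : α × β → ℝ≥0∞} {μ₁ : α → ℝ≥0∞}
    (hμ : ∀ a, ∑' b, μ (a, b) = μ₁ a) (f : α → γ → ℝ≥0∞) (c : γ) :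
    mbind f μ₁ c = ∑' p, μ p * f p.1 c := by
  simp only [mbind, ← hμ, ← ENNReal.tsum_mul_right]
  exact (ENNReal.tsum_prod (f := fun a b => μ (a, b) * f a c)).symm

theorem tsum_mul_snd_le_mbind {μ : α × β → ℝ≥0∞} {μ₂ : β → ℝ≥0∞}
    (hμ : ∀ b, ∑' a, μ (a, b) ≤ μ₂ b) (f : β → γ → ℝ≥0∞) (c : γ) :
    ∑' p, μ p * f p.2 c ≤ mbind f μ₂ c := by
  rw [ENNReal.tsum_prod', ENNReal.tsum_comm]
  simp only [ENNReal.tsum_mul_right]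
  exact ENNReal.tsum_le_tsum fun b => mul_le_mul_left (hμ b) _

end mbind

theorem IsLPCoupling.mbind {A B A' B' : Type*} {μ : A × B → ℝ≥0∞} {μ₁ : A → ℝ≥0∞}
    {μ₂ : B → ℝ≥0∞} {f₁ : A → A' → ℝ≥0∞} {f₂ : B → B' → ℝ≥0∞}
    {ν : A × B → A' × B' → ℝ≥0∞} (hμ : IsLPCoupling μ μ₁ μ₂)
    (hν : ∀ p, μ p ≠ 0 → IsLPCoupling (ν p) (f₁ p.1) (f₂ p.2)) :
    IsLPCoupling (mbind ν μ) (mbind f₁ μ₁) (mbind f₂ μ₂) := by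
  constructor
  · intro a'
    rw [tsum_fst_mbind, mbind_eq_tsum_mul_fst hμ.1]
    exact tsum_mul_congr_of_ne_zero fun p hp => (hν p hp).1 a'
  · intro b'
    rw [tsum_snd_mbind]
    exact (tsum_mul_le_of_ne_zero fun p hp => (hν p hp).2 b').trans
      (tsum_mul_snd_le_mbind hμ.2 f₂ b')

theorem refRcoupl_bind_general {A B A' B' : Type*}
    (μ₁ : A → ℝ≥0∞) (μ₂ : B → ℝ≥0∞) (f₁ : A → A' → ℝ≥0∞) (f₂ : B → B' → ℝ≥0∞)
    (R : A → B → Prop) (S : A' → B' → Prop)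
    (h : refRcoupl μ₁ μ₂ R) (hfs : ∀ a b, R a b → refRcoupl (f₁ a) (f₂ b) S) :
    refRcoupl (mbind f₁ μ₁) (mbind f₂ μ₂) S := by
  obtain ⟨μ, hμ, hμR⟩ := h
  have hν (p : A × B) : ∃ ν : A' × B' → ℝ≥0∞,
      μ p ≠ 0 → IsLPCoupling ν (f₁ p.1) (f₂ p.2) ∧ ∀ q, 0 < ν q → S q.1 q.2 := by
    by_cases hp : μ p = 0
    · exact ⟨0, fun hp' => absurd hp hp'⟩
    · obtain ⟨ν, hν⟩ := hfs p.1 p.2 (hμR p (pos_iff_ne_zero.2 hp))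
      exact ⟨ν, fun _ => hν⟩
  choose ν hν using hν
  refine ⟨mbind ν μ, hμ.mbind fun p hp => (hν p hp).1, fun q hq => ?_⟩
  obtain ⟨p, hp, hpq⟩ := mbind_ne_zero_iff.1 hq.ne'
  exact (hν p hp).2 q (pos_iff_ne_zero.2 hpq)

/-- left-partial couplings compose along bind. -/
theorem refRcoupl_bind {A B A' B' : Type*} [Countable A] [Countable B] [Countable A'] [Countable B']
    (μ₁ : A → ℝ≥0∞) (μ₂ : B → ℝ≥0∞) (f₁ : A → A' → ℝ≥0∞) (f₂ : B → B' → ℝ≥0∞)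
    (R : A → B → Prop) (S : A' → B' → Prop)
    (hμ₁ : IsSubPMF μ₁) (hμ₂ : IsSubPMF μ₂)
    (hf₁ : ∀ a, IsSubPMF (f₁ a)) (hf₂ : ∀ b, IsSubPMF (f₂ b))
    (h : refRcoupl μ₁ μ₂ R) (hfs : ∀ a b, R a b → refRcoupl (f₁ a) (f₂ b) S) :
    refRcoupl (mbind f₁ μ₁) (mbind f₂ μ₂) S :=
  refRcoupl_bind_general μ₁ μ₂ f₁ f₂ R S h hfs
end

section
/- Asymmetric bind-composition for left-partial couplings: if there is an R-left-partial coupling of μ₁ ∈ D(A) and mret(b) for some b ∈ B, and for all a with (a,b) ∈ R there is an S-left-partial coupling of f₁(a) and f₂(b), then there is an S-left-partial coupling of mbind(f₁, μ₁) and f₂(b). -/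
open scoped ENNReal Classical

/-- asymmetric bind-composition for left-partial couplings
against a Dirac distribution. -/
theorem refRcoupl_bind_ret {A B A' B' : Type*}
    [Countable A] [Countable B] [Countable A'] [Countable B']
    (μ₁ : A → ℝ≥0∞) (b : B) (f₁ : A → A' → ℝ≥0∞) (f₂ : B → B' → ℝ≥0∞)
    (R : A → B → Prop) (S : A' → B' → Prop)
    (hμ₁ : IsSubPMF μ₁) (hf₁ : ∀ a, IsSubPMF (f₁ a)) (hf₂ : ∀ b, IsSubPMF (f₂ b))
    (h : refRcoupl μ₁ (mret b) R)
    (hfs : ∀ a, R a b → refRcoupl (f₁ a) (f₂ b) S) :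
    refRcoupl (mbind f₁ μ₁) (f₂ b) S := by
  obtain ⟨ν, ⟨hνl, hνr⟩, hνR⟩ := h
  -- show: if μ₁ a > 0 then R a b
  have hzero : ∀ a b', b' ≠ b → ν (a, b') = 0 := by
    intro a b' hb'
    by_contra hne
    have hpos : 0 < ∑' a, ν (a, b') :=
      lt_of_lt_of_le (pos_iff_ne_zero.mpr hne) (ENNReal.le_tsum a)
    have := lt_of_lt_of_le hpos (hνr b')
    simp [mret, hb'] at this
  have hRab : ∀ a, 0 < μ₁ a → R a b := by
    intro a ha
    have : ν (a, b) = μ₁ a := by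
      rw [← hνl a]
      exact (tsum_eq_single (f := fun b' => ν (a, b')) b (fun b' hb' => hzero a b' hb')).symm
    exact hνR (a, b) (by rw [this]; exact ha)
  -- choose couplings
  have hchoice : ∀ a, ∃ η : A' × B' → ℝ≥0∞,
      (0 < μ₁ a → IsLPCoupling η (f₁ a) (f₂ b) ∧ ∀ p, 0 < η p → S p.1 p.2) := by
    intro a
    by_cases ha : 0 < μ₁ a
    · obtain ⟨η, hη⟩ := hfs a (hRab a ha)
      exact ⟨η, fun _ => hη⟩
    · exact ⟨0, fun h' => absurd h' ha⟩
  choose η hη using hchoice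
  refine ⟨fun p => ∑' a, μ₁ a * η a p, ⟨?_, ?_⟩, ?_⟩
  · intro a'
    rw [ENNReal.tsum_comm]
    simp only [mbind]
    congr 1; funext a
    rw [ENNReal.tsum_mul_left]
    by_cases ha : 0 < μ₁ a
    · rw [(hη a ha).1.1 a']
    · simp [nonpos_iff_eq_zero.mp (not_lt.mp ha)]
  · intro b'
    rw [ENNReal.tsum_comm]
    calc ∑' a, ∑' a', μ₁ a * η a (a', b')
        ≤ ∑' a, μ₁ a * f₂ b b' := by
          refine ENNReal.tsum_le_tsum fun a => ?_
          rw [ENNReal.tsum_mul_left]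
          by_cases ha : 0 < μ₁ a
          · exact mul_le_mul_right ((hη a ha).1.2 b') _
          · simp [nonpos_iff_eq_zero.mp (not_lt.mp ha)]
      _ = (∑' a, μ₁ a) * f₂ b b' := by rw [ENNReal.tsum_mul_right]
      _ ≤ 1 * f₂ b b' := mul_le_mul_left hμ₁ _
      _ = f₂ b b' := one_mul _
  · intro p hp
    obtain ⟨a, ha⟩ : ∃ a, 0 < μ₁ a * η a p := by
      by_contra hc
      push_neg at hc
      simp only [nonpos_iff_eq_zero] at hc
      simp [hc] at hp
    have h1 : 0 < μ₁ a := by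
      rcases (pos_iff_ne_zero.mp ha) with _
      exact pos_iff_ne_zero.mpr fun h0 => by simp [h0] at ha
    have h2 : 0 < η a p := pos_iff_ne_zero.mpr fun h0 => by simp [h0] at ha
    exact (hη a h1).2 p h2
end

section
/- Uniform erasure for a single presampling step: if ν is the distribution over states obtained from σ by appending, uniformly at random, a number n ≤ N to the tape labeled ι (each with probability 1/(N+1)), and reading from the nonempty tape is deterministic (consuming its head), then mbind(λσ'. read_ι(σ'), ν) — first appending a uniform sample then reading it — equals the uniform distribution on {0,…,N} paired with the original state σ. Formally, appending a uniform value to an empty tape and then consuming it is the same distribution as sampling directly. -/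
open scoped ENNReal Classical

/-- A state maps each tape label to a bound `N` and a finite sequence of numbers `≤ N`. -/
abbrev TapeState := ℕ → ℕ × List ℕ

/-- The state-step distribution at label ι: append a uniformly sampled `n ≤ N`
to the tape ι, each with probability 1/(N+1). -/
noncomputable def statestep (ι : ℕ) (σ : TapeState) : TapeState → ℝ≥0∞ :=
  fun σ' => ∑' n : ℕ,
    if n ≤ (σ ι).1 ∧ σ' = Function.update σ ι ((σ ι).1, (σ ι).2 ++ [n])
    then (((σ ι).1 : ℝ≥0∞) + 1)⁻¹ else 0

/-- Reading from tape ι: deterministic (consuming the head) on a nonempty tape,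
uniform on {0,…,N} (leaving the state unchanged) on an empty tape. -/
noncomputable def readTape (ι : ℕ) (σ : TapeState) : ℕ × TapeState → ℝ≥0∞ :=
  fun p =>
    match (σ ι).2 with
    | [] => if p.1 ≤ (σ ι).1 ∧ p.2 = σ then (((σ ι).1 : ℝ≥0∞) + 1)⁻¹ else 0
    | n :: t => if p = (n, Function.update σ ι ((σ ι).1, t)) then 1 else 0

/-- appending a uniform sample to an empty tape and then reading it
is the same distribution as sampling directly. -/
theorem erasure_single_step (ι : ℕ) (σ : TapeState) (N : ℕ) (h : σ ι = (N, [])) :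
    mbind (readTape ι) (statestep ι σ) = readTape ι σ := by
  funext p
  have hupd : ∀ n : ℕ,
      Function.update (Function.update σ ι (N, [n])) ι ((N : ℕ), ([] : List ℕ)) = σ := by
    intro n
    rw [Function.update_idem, ← h, Function.update_eq_self]
  have hread : ∀ n : ℕ, readTape ι (Function.update σ ι (N, [n])) p
      = if p = (n, σ) then 1 else 0 := by
    intro n
    simp only [readTape, Function.update_self, hupd n]
  have hstep : ∀ σ' : TapeState, statestep ι σ σ'
      = ∑' n : ℕ, if n ≤ N ∧ σ' = Function.update σ ι (N, [n])
          then ((N : ℝ≥0∞) + 1)⁻¹ else 0 := by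
    intro σ'
    simp [statestep, h]
  have hR : readTape ι σ p = if p.1 ≤ N ∧ p.2 = σ then ((N : ℝ≥0∞) + 1)⁻¹ else 0 := by
    simp [readTape, h]
  show (∑' σ' : TapeState, statestep ι σ σ' * readTape ι σ' p) = readTape ι σ p
  calc (∑' σ' : TapeState, statestep ι σ σ' * readTape ι σ' p)
      = ∑' σ' : TapeState, ∑' n : ℕ,
          (if n ≤ N ∧ σ' = Function.update σ ι (N, [n]) then ((N : ℝ≥0∞) + 1)⁻¹ else 0)
            * readTape ι σ' p := by
        congr 1; funext σ'; rw [hstep σ']; exact ENNReal.tsum_mul_right.symm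
    _ = ∑' n : ℕ, ∑' σ' : TapeState,
          (if n ≤ N ∧ σ' = Function.update σ ι (N, [n]) then ((N : ℝ≥0∞) + 1)⁻¹ else 0)
            * readTape ι σ' p := ENNReal.tsum_comm
    _ = ∑' n : ℕ, if n ≤ N
          then ((N : ℝ≥0∞) + 1)⁻¹ * readTape ι (Function.update σ ι (N, [n])) p else 0 := by
        congr 1; funext n
        by_cases hn : n ≤ N
        · simp only [hn, true_and, if_true]
          rw [tsum_eq_single (Function.update σ ι (N, [n]))]
          · simp
          · intro σ' hσ'; simp [hσ']
        · simp [hn]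
    _ = ∑' n : ℕ, if n ≤ N then ((N : ℝ≥0∞) + 1)⁻¹ * (if p = (n, σ) then 1 else 0) else 0 := by
        congr 1; funext n; rw [hread n]
    _ = if p.1 ≤ N ∧ p.2 = σ then ((N : ℝ≥0∞) + 1)⁻¹ else 0 := by
        rw [tsum_eq_single p.1]
        · by_cases h1 : p.1 ≤ N
          · have : (p = (p.1, σ)) ↔ p.2 = σ := by
              constructor
              · intro hp; rw [hp]
              · intro hp; exact Prod.ext rfl hp
            by_cases h2 : p.2 = σ <;> simp [h1, h2, this]
          · simp [h1]
        · intro n hn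
          have : ¬ (p = (n, σ)) := by
            intro hp; exact hn (by rw [hp])
          simp [this]
    _ = readTape ι σ p := hR.symm
end
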